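/- arXiv:0705.4297 — 5 statements merged into one kernel-verified Lean document; each statement's English description precedes it below -/
import Mathlib

section
/- If P and Q are mutually dense subsets of a common partial order (i.e., every element of P has an element of Q below it and vice versa), and κ is a cardinal, then P has a dense subset D such that no element of D lies below κ-many elements of D if and only if Q has such a dense subset. -/
/-!
Push a dense `κ^op`-like `D ⊆ P` down into `Q` by a choice function `f` with `f d ∈ Q` and
`f d ≤ d`. The image `f '' D` is dense in `Q` because `Q`, `P`, `D` are successively coinitial.
It is again `κ^op`-like: below `e ∈ f '' D` there is some `d₀ ∈ D`, and every `f d ≥ e` has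
`d ≥ f d ≥ e ≥ d₀`, so the elements of `f '' D` above `e` are images of elements of `D` above `d₀`.
-/

open Cardinal

universe u

variable {α : Type u} [PartialOrder α]

def Set.IsOpLike (κ : Cardinal.{u}) (D : Set α) : Prop :=
  ∀ d ∈ D, #{e : α // e ∈ D ∧ d ≤ e} < κ

def Set.IsAlmostOpLike (κ : Cardinal.{u}) (S : Set α) : Prop :=
  ∃ D ⊆ S, IsCoinitialFor S D ∧ D.IsOpLike κ

namespace Set

variable {κ : Cardinal.{u}}

theorem IsOpLike.image_of_le {D : Set α} (hD : D.IsOpLike κ) {f : α → α}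
    (hf : ∀ d ∈ D, f d ≤ d) (hcoinit : IsCoinitialFor (f '' D) D) :
    (f '' D).IsOpLike κ := by
  intro e he
  obtain ⟨d₀, hd₀, hd₀e⟩ := hcoinit he
  have hsub : {e' | e' ∈ f '' D ∧ e ≤ e'} ⊆ f '' {d | d ∈ D ∧ d₀ ≤ d} := by
    rintro _ ⟨⟨d, hd, rfl⟩, hle⟩
    exact ⟨d, ⟨hd, hd₀e.trans (hle.trans (hf d hd))⟩, rfl⟩
  calc #{e' : α // e' ∈ f '' D ∧ e ≤ e'}
      ≤ #(f '' {d | d ∈ D ∧ d₀ ≤ d}) := mk_le_mk_of_subset hsub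
    _ ≤ #{d : α // d ∈ D ∧ d₀ ≤ d} := mk_image_le
    _ < κ := hD d₀ hd₀

theorem IsAlmostOpLike.of_isCoinitialFor {P Q : Set α} (hP : P.IsAlmostOpLike κ)
    (hPQ : IsCoinitialFor P Q) (hQP : IsCoinitialFor Q P) : Q.IsAlmostOpLike κ := by
  obtain ⟨D, hDP, hPD, hD⟩ := hP
  choose! f hfQ hfle using fun d (hd : d ∈ D) => hPQ (hDP hd)
  have hQf : IsCoinitialFor Q (f '' D) := by
    intro q hq
    obtain ⟨d, hd, hdq⟩ := hQP.trans hPD hq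
    exact ⟨f d, mem_image_of_mem f hd, (hfle d hd).trans hdq⟩
  have hfDQ : f '' D ⊆ Q := image_subset_iff.2 hfQ
  exact ⟨f '' D, hfDQ, hQf, hD.image_of_le hfle ((hQP.trans hPD).mono_left hfDQ)⟩

end Set

/-- Lemma (mutually dense posets): `P` is almost `κ^op`-like iff `Q` is, where
`D ⊆ P` is dense in `P` if every element of `P` has an element of `D` below it, and
`D` is `κ^op`-like if no element of `D` is below `κ`-many elements of `D`. -/
theorem mutually_dense_almost_opLike {α : Type u} [PartialOrder α] (P Q : Set α)
    (κ : Cardinal.{u})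
    (hPQ : ∀ p ∈ P, ∃ q ∈ Q, q ≤ p) (hQP : ∀ q ∈ Q, ∃ p ∈ P, p ≤ q) :
    (∃ D ⊆ P, (∀ p ∈ P, ∃ d ∈ D, d ≤ p) ∧
        ∀ d ∈ D, #{e : α // e ∈ D ∧ d ≤ e} < κ) ↔
    (∃ E ⊆ Q, (∀ q ∈ Q, ∃ e ∈ E, e ≤ q) ∧
        ∀ d ∈ E, #{e : α // e ∈ E ∧ d ≤ e} < κ) :=
  ⟨fun h => Set.IsAlmostOpLike.of_isCoinitialFor h hPQ hQP,
    fun h => Set.IsAlmostOpLike.of_isCoinitialFor h hQP hPQ⟩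
end

section
/- Every partially ordered set P has a dense subset D (every element of P has an element of D below it) such that no element of D lies below |P|-many elements of D, where |P| is the cardinality of P (assumed infinite). -/
/-!
Well-order `P` in order type `|P|` (an initial ordinal), and let `D` consist of the points that come
first in this well-order among the points below them. Every `p` has such a point below it, namely
the first point below `p`. If `d ≤ e` with `e ∈ D`, then `e` comes no later than `d`, so the
elements of `D` above `d` inject into the initial segment up to `d`, which has size `< |P|`.
-/

open Cardinal Set Function
open scoped Ordinal

universe u v

section MinimalForIic

variable {α : Type u} {β : Type v} [Preorder α]

def minimalForIic [Preorder β] (f : α → β) : Set α :=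
  {x | MinimalFor (· ∈ Iic x) f x}

theorem exists_mem_minimalForIic_le [Preorder β] [WellFoundedLT β] (f : α → β) (p : α) :
    ∃ d ∈ minimalForIic f, d ≤ p := by
  obtain ⟨d, hdp, hmin⟩ := exists_minimalFor_of_wellFoundedLT (· ∈ Iic p) f ⟨p, le_rfl⟩
  exact ⟨d, ⟨le_rfl, fun e hed => hmin (le_trans hed hdp)⟩, hdp⟩

theorem lift_mk_minimalForIic_Ici_le [LinearOrder β] {f : α → β} (hf : Injective f) (d : α) :
    lift.{v} #{e // e ∈ minimalForIic f ∧ d ≤ e} ≤ lift.{u} #(Iic (f d)) := by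
  refine lift_mk_le_lift_mk_of_injective
    (f := fun e => (⟨f e, e.2.1.le e.2.2⟩ : Iic (f d))) fun e e' h => ?_
  exact Subtype.ext (hf (congrArg Subtype.val h))

end MinimalForIic

/-- Every infinite poset `P` has a dense subset `D` (every element of `P` has an
element of `D` below it) that is `|P|^op`-like: no element of `D` is below
`|P|`-many elements of `D`. -/
theorem exists_dense_card_opLike {α : Type u} [PartialOrder α] [Infinite α] :
    ∃ D : Set α, (∀ p : α, ∃ d ∈ D, d ≤ p) ∧
      ∀ d ∈ D, #{e : α // e ∈ D ∧ d ≤ e} < #α := by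
  let β := (#α).ord.ToType
  obtain ⟨f⟩ : Nonempty (α ≃ β) := Cardinal.eq.mp (mk_ord_toType #α).symm
  refine ⟨minimalForIic f, exists_mem_minimalForIic_le f, fun d _ => ?_⟩
  have hβ : ord #β = typeLT β := by rw [mk_ord_toType, Ordinal.type_toType]
  calc #{e // e ∈ minimalForIic f ∧ d ≤ e}
      ≤ #(Iic (f d)) := by simpa using lift_mk_minimalForIic_Ici_le f.injective d
    _ < #β := mk_Iic_lt (f d) hβ (by simp [β])
    _ = #α := mk_ord_toType _
end

section
/- If the reaping number 𝔯 equals the continuum 𝔠, then there exists a sequence ⟨y_α⟩_{α<𝔠} of infinite subsets of ω such that for every I ⊆ 𝔠 of cardinality 𝔠 and every infinite x ⊆ ω, there exists α ∈ I such that y_α splits x (i.e., both x ∩ y_α and x \ y_α are infinite). -/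
/-!
Enumerate the infinite subsets of `ω` as `⟨x_α⟩_{α<𝔠}` and let `y_α` split every `x_β` with
`β ≤ α`, which is possible because fewer than `𝔠 = 𝔯` sets are involved. A set `I ⊆ 𝔠` of size
`𝔠` is unbounded in the initial ordinal `𝔠`, so for `x = x_β` it contains some `α ≥ β`.
-/

open Cardinal Ordinal Set

/-- `s` splits `t`: both `t ∩ s` and `t \ s` are infinite. -/
def Splits (s t : Set ℕ) : Prop := (t ∩ s).Infinite ∧ (t \ s).Infinite

/-- The reaping number `𝔯`: the least cardinality of a family `A` of infinite subsets
of `ω` such that no single infinite set splits every member of `A`. -/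
noncomputable def reapingNumber : Cardinal.{0} :=
  sInf {c | ∃ A : Set (Set ℕ), (∀ y ∈ A, y.Infinite) ∧
    (∀ x : Set ℕ, x.Infinite → ∃ y ∈ A, ¬ Splits x y) ∧ c = #A}

theorem exists_splits_of_mk_lt_reapingNumber {A : Set (Set ℕ)} (hA_inf : ∀ y ∈ A, y.Infinite)
    (hA : #A < reapingNumber) : ∃ x : Set ℕ, x.Infinite ∧ ∀ y ∈ A, Splits x y := by
  by_contra! hA_unsplit
  have h_mem : #A ∈ {c | ∃ A : Set (Set ℕ), (∀ y ∈ A, y.Infinite) ∧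
      (∀ x : Set ℕ, x.Infinite → ∃ y ∈ A, ¬ Splits x y) ∧ c = #A} :=
    ⟨A, hA_inf, hA_unsplit, rfl⟩
  exact (csInf_le' h_mem).not_gt hA

theorem mk_setOf_infinite_nat : #{s : Set ℕ | s.Infinite} = 𝔠 := by
  have h_compl : {s : Set ℕ | s.Infinite} = {s : Set ℕ | s.Finite}ᶜ := rfl
  have h_set : #(Set ℕ) = 𝔠 := by rw [mk_set, mk_nat, two_power_aleph0]
  have h_finite : #{s : Set ℕ | s.Finite} < #(Set ℕ) :=
    h_set ▸ Countable.ofPred_finite.le_aleph0.trans_lt aleph0_lt_continuum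
  rw [h_compl, mk_compl_of_infinite _ h_finite, h_set]

theorem exists_mem_le_of_mk_eq {ι : Type*} [LinearOrder ι] [WellFoundedLT ι]
    (hι : ord #ι = typeLT ι) {I : Set ι} (hI : #I = #ι) (b : ι) : ∃ a ∈ I, b ≤ a := by
  by_contra! hI_bdd
  exact (mk_le_mk_of_subset hI_bdd).not_gt (hI ▸ mk_Iio_lt b hι)

/-- If `𝔯 = 𝔠`, then there is a sequence `⟨y_α⟩_{α<𝔠}` of infinite subsets of `ω`
such that for every `I ⊆ 𝔠` of size `𝔠` and every infinite `x ⊆ ω`, some `y_α`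
with `α ∈ I` splits `x`. -/
theorem reaping_eq_continuum_implies_supersplitting
    (h : reapingNumber = Cardinal.continuum) :
    ∃ (ι : Type) (y : ι → Set ℕ), #ι = Cardinal.continuum ∧
      (∀ i, (y i).Infinite) ∧
      ∀ I : Set ι, #I = Cardinal.continuum →
        ∀ x : Set ℕ, x.Infinite → ∃ i ∈ I, Splits (y i) x := by
  let ι := (continuum.{0}).ord.ToType
  have hι : #ι = 𝔠 := by simp [ι]
  have hι_ord : ord #ι = typeLT ι := by simp [ι]
  obtain ⟨x⟩ : Nonempty (ι ≃ {s : Set ℕ | s.Infinite}) :=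
    Cardinal.eq.1 (hι.trans mk_setOf_infinite_nat.symm)
  have h_splitter (a : ι) : ∃ y : Set ℕ, y.Infinite ∧ ∀ b ≤ a, Splits y (x b) := by
    have h_small : #((fun b ↦ (x b : Set ℕ)) '' Iic a) < reapingNumber :=
      calc #((fun b ↦ (x b : Set ℕ)) '' Iic a) ≤ #(Iic a) := mk_image_le
        _ < #ι := mk_Iic_lt a hι_ord (hι ▸ aleph0_le_continuum)
        _ = reapingNumber := hι.trans h.symm
    obtain ⟨y, hy_inf, hy⟩ :=
      exists_splits_of_mk_lt_reapingNumber (by rintro _ ⟨b, -, rfl⟩; exact (x b).2) h_small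
    exact ⟨y, hy_inf, fun b hb ↦ hy _ ⟨b, hb, rfl⟩⟩
  choose y hy_inf hy_splits using h_splitter
  refine ⟨ι, y, hι, hy_inf, fun I hI s hs ↦ ?_⟩
  obtain ⟨a, haI, hba⟩ := exists_mem_le_of_mk_eq hι_ord (hI.trans hι.symm) (x.symm ⟨s, hs⟩)
  exact ⟨a, haI, by simpa using hy_splits a _ hba⟩
end

section
/- Suppose κ and λ are regular cardinals with κ ≤ λ and μ is a regular cardinal with μ < λ. Then no cofinal subset I of the product poset κ × λ (with the coordinatewise order) is μ-like; that is, every cofinal I ⊆ κ × λ contains an element lying above μ-many elements of I. -/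
/-!
Every bounded subset of `I` of size `μ` yields the required element: cofinality of `I` gives
some `y ∈ I` above its bound. Sets of size `μ < λ` are bounded in the second coordinate, so it
suffices to find `μ` elements of `I` whose first coordinates are bounded. If `μ < κ`, any `μ`
elements of `I` will do (`I` has at least `λ` elements). Otherwise `κ < λ`, and some slice
`{z ∈ I | z.1 ≤ a}` has unbounded second coordinates: else the `κ` many bounds of the slices
would be bounded by some `b < λ`, and no element of `I` could lie above `(a, b)`.
-/

open Cardinal Order Set

universe u

theorem bddAbove_of_mk_lt_cof {α : Type u} [LinearOrder α] {s : Set α} (hs : #s < cof α) :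
    BddAbove s :=
  BddAbove.of_not_isCofinal fun h ↦ (cof_le h).not_gt hs

theorem IsCofinal.exists_mk_le_mk_inter_Iic {P : Type u} [Preorder P] {I s : Set P}
    (hI : IsCofinal I) (hsI : s ⊆ I) (hs : BddAbove s) : ∃ y ∈ I, #s ≤ #↥(I ∩ Iic y) := by
  obtain ⟨x, hx⟩ := hs
  obtain ⟨y, hyI, hxy⟩ := hI x
  exact ⟨y, hyI, mk_le_mk_of_subset fun z hz ↦ ⟨hsI hz, (hx hz).trans hxy⟩⟩

section Prod

variable {α β : Type u}

theorem IsCofinal.snd_image [Preorder α] [Preorder β] [Nonempty α] {I : Set (α × β)}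
    (hI : IsCofinal I) : IsCofinal (Prod.snd '' I) :=
  hI.image monotone_snd fun b ↦ ⟨b, ⟨(Classical.arbitrary α, b), rfl⟩, le_rfl⟩

theorem bddAbove_of_fst_bddAbove_of_mk_lt_cof [Preorder α] [LinearOrder β] {s : Set (α × β)}
    (hs₁ : BddAbove (Prod.fst '' s)) (hs₂ : #s < cof β) : BddAbove s :=
  bddAbove_prod.2 ⟨hs₁, bddAbove_of_mk_lt_cof (mk_image_le.trans_lt hs₂)⟩

theorem IsCofinal.exists_le_mk_inter_Iic_of_lt_cof_of_lt_cof [LinearOrder α] [LinearOrder β]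
    {I : Set (α × β)} {μ : Cardinal.{u}} (hI : IsCofinal I) (hμα : μ < cof α)
    (hμβ : μ < cof β) : ∃ y ∈ I, μ ≤ #↥(I ∩ Iic y) := by
  have : Nonempty α := cof_ne_zero_iff.1 (pos_of_gt hμα).ne'
  have hμI : μ ≤ #I := hμβ.le.trans ((cof_le hI.snd_image).trans mk_image_le)
  obtain ⟨s, hsI, rfl⟩ := le_mk_iff_exists_subset.1 hμI
  have hs₁ : BddAbove (Prod.fst '' s) := bddAbove_of_mk_lt_cof (mk_image_le.trans_lt hμα)
  exact hI.exists_mk_le_mk_inter_Iic hsI (bddAbove_of_fst_bddAbove_of_mk_lt_cof hs₁ hμβ)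

theorem IsCofinal.exists_isCofinal_snd_image_inter_fst_le [Preorder α] [LinearOrder β]
    [Nonempty α] {I : Set (α × β)} (hI : IsCofinal I) (hα : #α < cof β) :
    ∃ a, IsCofinal (Prod.snd '' (I ∩ {z | z.1 ≤ a})) := by
  by_contra! h
  choose g hg using fun a ↦ not_isCofinal_iff.1 (h a)
  obtain ⟨b, hb⟩ := bddAbove_of_mk_lt_cof (mk_range_le.trans_lt hα)
  obtain ⟨y, hyI, hy⟩ := hI (Classical.arbitrary α, b)
  have hy₂ : y.2 < g y.1 := hg y.1 y.2 ⟨y, ⟨hyI, le_rfl⟩, rfl⟩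
  exact (hy₂.trans_le ((hb (mem_range_self y.1)).trans hy.2)).false

theorem IsCofinal.exists_le_mk_inter_Iic_of_mk_lt_cof [Preorder α] [LinearOrder β]
    [Nonempty α] {I : Set (α × β)} {μ : Cardinal.{u}} (hI : IsCofinal I) (hα : #α < cof β)
    (hμ : μ < cof β) : ∃ y ∈ I, μ ≤ #↥(I ∩ Iic y) := by
  obtain ⟨a, ha⟩ := hI.exists_isCofinal_snd_image_inter_fst_le hα
  have hμT : μ ≤ #↥(I ∩ {z | z.1 ≤ a}) := hμ.le.trans ((cof_le ha).trans mk_image_le)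
  obtain ⟨s, hsT, rfl⟩ := le_mk_iff_exists_subset.1 hμT
  have hs₁ : BddAbove (Prod.fst '' s) := ⟨a, by rintro _ ⟨z, hz, rfl⟩; exact (hsT hz).2⟩
  exact hI.exists_mk_le_mk_inter_Iic (hsT.trans inter_subset_left)
    (bddAbove_of_fst_bddAbove_of_mk_lt_cof hs₁ hμ)

end Prod

theorem cofinal_subset_of_prod_not_muLike_general
    (κ lam mu : Cardinal.{u})
    (hκ : κ.IsRegular) (hlam : lam.IsRegular)
    (hml : mu < lam) :
    ∀ I : Set (κ.ord.ToType × lam.ord.ToType),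
      (∀ x : κ.ord.ToType × lam.ord.ToType, ∃ y ∈ I, x ≤ y) →
      ∃ y ∈ I, mu ≤ #{z : κ.ord.ToType × lam.ord.ToType // z ∈ I ∧ z ≤ y} := by
  intro I (hI : IsCofinal I)
  have hcofκ : cof κ.ord.ToType = κ := by rw [Ordinal.cof_toType, hκ.cof_ord]
  have hcofLam : cof lam.ord.ToType = lam := by rw [Ordinal.cof_toType, hlam.cof_ord]
  have hμ : mu < cof lam.ord.ToType := by rwa [hcofLam]
  rcases lt_or_ge mu κ with hμκ | hκμ
  · exact hI.exists_le_mk_inter_Iic_of_lt_cof_of_lt_cof (by rwa [hcofκ]) hμ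
  · have : Nonempty κ.ord.ToType := cof_ne_zero_iff.1 (by rw [hcofκ]; exact hκ.pos.ne')
    have hκLam : #κ.ord.ToType < cof lam.ord.ToType := by
      rw [mk_toType, card_ord, hcofLam]
      exact hκμ.trans_lt hml
    exact hI.exists_le_mk_inter_Iic_of_mk_lt_cof hκLam hμ

/-- Lemma: for regular cardinals `κ ≤ λ` and regular `μ < λ`, no cofinal subset of
the product poset `κ × λ` is `μ`-like: every cofinal `I ⊆ κ × λ` has an element
lying above `μ`-many elements of `I`. -/
theorem cofinal_subset_of_prod_not_muLike
    (κ lam mu : Cardinal.{u})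
    (hκ : κ.IsRegular) (hlam : lam.IsRegular) (hmu : mu.IsRegular)
    (hkl : κ ≤ lam) (hml : mu < lam) :
    ∀ I : Set (κ.ord.ToType × lam.ord.ToType),
      (∀ x : κ.ord.ToType × lam.ord.ToType, ∃ y ∈ I, x ≤ y) →
      ∃ y ∈ I, mu ≤ #{z : κ.ord.ToType × lam.ord.ToType // z ∈ I ∧ z ≤ y} :=
  cofinal_subset_of_prod_not_muLike_general κ lam mu hκ hlam hml
end

section
/- Let ℙ be a forcing poset, A a subset of [ω]^ω with the strong finite intersection property, ℚ the Booth forcing for A, and x a ℚ-name for the generic pseudointersection of A. Let B be a ℙ-name such that the trivial condition of ℙ forces Ǎ ⊆ B ⊆ [ω]^ω and forces B to have the strong finite intersection property. Then the trivial condition of ℙ * ℚ̌ forces that B ∪ {x} (under the canonical embeddings of ℙ-names and ℚ-names into ℙ*ℚ̌-names) has the strong finite intersection property. -/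
universe u

/-!
Given a condition `(p, (σ, F))` of `P * Q̌`, a finite set `t` of names from `B` and a bound `n`,
add to `t` the check-names of the members of `F`; these lie in `B`, so the SFIP of `B` yields
`q ≤ p` forcing some `m ≥ n` into all of them. Such an `m` lies in `⋂ F`, so `(σ ∪ {m}, F)`
extends `(σ, F)` in the Booth forcing and puts `m` into the generic pseudointersection.
-/

def IsCheckName {P : Type*} (x : P → ℕ → Option Bool) (a : Set ℕ) : Prop :=
  ∀ p n, x p n = some (@decide (n ∈ a) (Classical.propDecidable _))

theorem IsCheckName.mem_of_eq_some_true {P : Type*} {x : P → ℕ → Option Bool} {a : Set ℕ}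
    (hx : IsCheckName x a) {q : P} {m : ℕ} (h : x q m = some true) : m ∈ a := by
  have hdec := (hx q m).symm.trans h
  exact @of_decide_eq_true _ (Classical.propDecidable _) (Option.some_injective _ hdec)

theorem Finset.coe_insert_subset_union_of_mem {α : Type*} [DecidableEq α] {σ : Finset α}
    {S : Set α} {m : α} (hm : m ∈ S) : (↑(insert m σ) : Set α) ⊆ ↑σ ∪ S := by
  rw [Finset.coe_insert]
  exact Set.insert_subset (Or.inr hm) Set.subset_union_left

theorem exists_forces_mem_sInter_of_isCheckName {P ι : Type*} [LE P]
    {y : ι → P → ℕ → Option Bool}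
    (hBsfip : ∀ (t : Finset ι) (p : P) (n : ℕ),
      ∃ q, q ≤ p ∧ ∃ m, n ≤ m ∧ ∀ i ∈ t, y i q m = some true)
    {F : Finset (Set ℕ)} (hF : ∀ a ∈ F, ∃ i, IsCheckName (y i) a) (t : Finset ι) (p : P)
    (n : ℕ) :
    ∃ q, q ≤ p ∧ ∃ m, n ≤ m ∧ m ∈ ⋂₀ (F : Set (Set ℕ)) ∧ ∀ i ∈ t, y i q m = some true := by
  classical
  choose name hname using hF
  obtain ⟨q, hq, m, hnm, hforced⟩ :=
    hBsfip (t ∪ F.attach.image fun a : {a // a ∈ F} => name a.1 a.2) p n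
  refine ⟨q, hq, m, hnm, fun a ha => ?_, fun i hi => hforced i (Finset.mem_union_left _ hi)⟩
  refine (hname a ha).mem_of_eq_some_true (hforced _ (Finset.mem_union_right _ ?_))
  exact Finset.mem_image.2 ⟨⟨a, ha⟩, Finset.mem_attach _ _, rfl⟩

theorem booth_generic_pseudointersection_sfip_general {P : Type u} [Preorder P]
    (A : Set (Set ℕ))
    {ι : Type u} (y : ι → P → ℕ → Option Bool)
    (hcheck : ∀ a ∈ A, ∃ i, ∀ p n,
      y i p n = some (@decide (n ∈ a) (Classical.propDecidable _)))
    (hBsfip : ∀ (t : Finset ι) (p : P) (n : ℕ),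
      ∃ q, q ≤ p ∧ ∃ m, n ≤ m ∧ ∀ i ∈ t, y i q m = some true) :
    ∀ (p : P) (σ : Finset ℕ) (F : Finset (Set ℕ)), ↑F ⊆ A → ∀ (t : Finset ι) (n : ℕ),
      ∃ q, q ≤ p ∧ ∃ (σ' : Finset ℕ) (F' : Finset (Set ℕ)), ↑F' ⊆ A ∧ F ⊆ F' ∧ σ ⊆ σ' ∧
        (↑σ' : Set ℕ) ⊆ (↑σ : Set ℕ) ∪ ⋂₀ (F : Set (Set ℕ)) ∧
        ∃ m, n ≤ m ∧ m ∈ σ' ∧ ∀ i ∈ t, y i q m = some true := by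
  intro p σ F hFA t n
  obtain ⟨q, hq, m, hnm, hmF, hforced⟩ :=
    exists_forces_mem_sInter_of_isCheckName hBsfip (fun a ha => hcheck a (hFA ha)) t p n
  exact ⟨q, hq, insert m σ, F, hFA, subset_rfl, Finset.subset_insert m σ,
    Finset.coe_insert_subset_union_of_mem hmF, m, hnm, Finset.mem_insert_self m σ, hforced⟩

/-- Booth forcing preserves that a generic pseudointersection meets every finite
subfamily of a name for an SFIP family.  Setup: `P` is a forcing poset; `A` is a
family of infinite subsets of `ω` with the strong finite intersection property;
the Booth forcing `Q` for `A` has conditions `(σ, F)` with `σ : Finset ℕ` and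
`F ∈ [A]^{<ω}`, extension meaning `F` grows, `σ` end-extends inside `⋂ F`, and the
generic pseudointersection `x` is the union of the first coordinates.  A `P`-name
`B` with `1 ⊩ Ǎ ⊆ B ⊆ [ω]^ω` and `1 ⊩ "B has the SFIP"` is encoded by a family of
`P`-names for subsets of `ω`: partial decision functions `y i : P → ℕ → Option Bool`
that are monotone and densely decided, such that every member of `A` occurs as a
check-name (`hcheck`) and every finite subfamily is forced to have infinite
intersection (`hBsfip`).  Conclusion: in the two-step iteration `P * Q̌`
(equivalently the product order), below any condition `(p, (σ, F))` and for any
finite set `t` of names from `B` and any `n`, some stronger condition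
`(q, (σ', F'))` forces an `m ≥ n` into `x ∩ ⋂_{i ∈ t} y i`; i.e. `1_{P*Q̌}` forces
`B ∪ {x}` to have the SFIP. -/
theorem booth_generic_pseudointersection_sfip {P : Type u} [Preorder P]
    (A : Set (Set ℕ)) (hAinf : ∀ a ∈ A, a.Infinite)
    (hSFIP : ∀ s : Finset (Set ℕ), ↑s ⊆ A → (⋂₀ (s : Set (Set ℕ))).Infinite)
    {ι : Type u} (y : ι → P → ℕ → Option Bool)
    (hmono : ∀ i p q n b, q ≤ p → y i p n = some b → y i q n = some b)
    (hdense : ∀ i p n, ∃ q, q ≤ p ∧ (y i q n).isSome)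
    (hcheck : ∀ a ∈ A, ∃ i, ∀ p n,
      y i p n = some (@decide (n ∈ a) (Classical.propDecidable _)))
    (hBsfip : ∀ (t : Finset ι) (p : P) (n : ℕ),
      ∃ q, q ≤ p ∧ ∃ m, n ≤ m ∧ ∀ i ∈ t, y i q m = some true) :
    ∀ (p : P) (σ : Finset ℕ) (F : Finset (Set ℕ)), ↑F ⊆ A → ∀ (t : Finset ι) (n : ℕ),
      ∃ q, q ≤ p ∧ ∃ (σ' : Finset ℕ) (F' : Finset (Set ℕ)), ↑F' ⊆ A ∧ F ⊆ F' ∧ σ ⊆ σ' ∧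
        (↑σ' : Set ℕ) ⊆ (↑σ : Set ℕ) ∪ ⋂₀ (F : Set (Set ℕ)) ∧
        ∃ m, n ≤ m ∧ m ∈ σ' ∧ ∀ i ∈ t, y i q m = some true :=
  booth_generic_pseudointersection_sfip_general A y hcheck hBsfip
end
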